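/- Let W, Y, Z be independent, non-degenerate, non-negative random variables, let a, b, c ≥ 0 and z > 0, and assume all Laplace transforms and expectations involved exist and are finite. Then E[|aW + bY − cZ| exp{−z(W+Y+Z)}] = L_W(z) L_Y(z) L_Z(z) · {a E[W_z] + b E[Y_z] + c E[Z_z]} · G(aW_z + bY_z, cZ_z), where W_z, Y_z, Z_z are independent random variables distributed as the exponential tiltings of W, Y, Z respectively. -/

import Mathlib

/-!
Since `e^{-z(w+y+u)} = e^{-zw} e^{-zy} e^{-zu}`, reweighting the product law of `(W, Y, Z)` by
`e^{-z(w+y+u)}` and renormalising by `L_W(z) L_Y(z) L_Z(z)` gives the product of the three tilted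
laws, i.e. the law of `(W_z, Y_z, Z_z)`. Hence
`E[g(W, Y, Z) e^{-z(W+Y+Z)}] = L_W(z) L_Y(z) L_Z(z) E[g(W_z, Y_z, Z_z)]` for every measurable `g`,
and for `g = |a w + b y - c u|` the factor `E[Y₁] + E[Y₂]` cancels against the denominator of
`G(Y₁, Y₂)`. When that factor is `0` (where `x / 0 = 0`), then `E|Y₁ - Y₂| = 0` too, because the
tilted variables are non-negative and so `E|Y₁ - Y₂| ≤ E[Y₁] + E[Y₂]`.
-/

open MeasureTheory ProbabilityTheory Set

/-- The exponentially tilted (Esscher-transformed) version of a distribution `ν` on `ℝ` with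
tilting parameter `z`: the measure with density `e^{-zx} / ∫ e^{-zy} dν(y)` with respect to
`ν`.  For a non-negative random variable `W` with law `ν`, this is exactly the law of `W_z`,
whose CDF is `F_{W_z}(t) = E[1_{0 ≤ W ≤ t} e^{-zW}] / L_W(z)`. -/
noncomputable def tilt (ν : Measure ℝ) (z : ℝ) : Measure ℝ :=
  ν.withDensity fun x => ENNReal.ofReal (Real.exp (-(z * x)) / ∫ y, Real.exp (-(z * y)) ∂ν)

open Real

section Tilted

variable {α β : Type*} {mα : MeasurableSpace α} {mβ : MeasurableSpace β}
  {μ : Measure α} {ν : Measure β}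

lemma integral_exp_ne_zero_of_tilted_ne_zero {f : α → ℝ} (h : μ.tilted f ≠ 0) :
    ∫ x, exp (f x) ∂μ ≠ 0 :=
  fun h0 => h (by simp [Measure.tilted, h0])

lemma integral_exp_add_prod [SFinite μ] [SFinite ν] (f : α → ℝ) (g : β → ℝ) :
    ∫ p, exp (f p.1 + g p.2) ∂μ.prod ν = (∫ x, exp (f x) ∂μ) * ∫ y, exp (g y) ∂ν := by
  simp_rw [exp_add]
  exact integral_prod_mul (fun x => exp (f x)) (fun y => exp (g y))

lemma prod_tilted [SFinite μ] [SFinite ν] {f : α → ℝ} {g : β → ℝ}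
    (hf : Measurable f) (hg : Measurable g) :
    (μ.tilted f).prod (ν.tilted g) = (μ.prod ν).tilted fun p => f p.1 + g p.2 := by
  rw [Measure.tilted, Measure.tilted, Measure.tilted, prod_withDensity (by fun_prop) (by fun_prop),
    integral_exp_add_prod]
  congr 1
  ext p
  rw [← ENNReal.ofReal_mul (div_nonneg (exp_pos _).le (integral_nonneg fun _ => (exp_pos _).le)),
    exp_add, mul_div_mul_comm]

end Tilted

lemma tilt_eq_tilted (ν : Measure ℝ) (z : ℝ) : tilt ν z = ν.tilted fun x => -(z * x) := rfl

lemma ProbabilityTheory.iIndepFun.map_eq_prod_three {Ω β : Type*}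
    {mΩ : MeasurableSpace Ω} {mβ : MeasurableSpace β} {μ : Measure Ω} [IsProbabilityMeasure μ]
    {X₁ X₂ X₃ : Ω → β} (h : iIndepFun ![X₁, X₂, X₃] μ)
    (h₁ : Measurable X₁) (h₂ : Measurable X₂) (h₃ : Measurable X₃) :
    μ.map (fun ω => (X₁ ω, X₂ ω, X₃ ω)) = (μ.map X₁).prod ((μ.map X₂).prod (μ.map X₃)) := by
  have hmeas : ∀ i, Measurable (![X₁, X₂, X₃] i) := fun i => by fin_cases i <;> assumption
  have h23 : IndepFun X₂ X₃ μ := h.indepFun (i := 1) (j := 2) (by decide)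
  have h1_23 : IndepFun X₁ (fun ω => (X₂ ω, X₃ ω)) μ :=
    (h.indepFun_prodMk hmeas 1 2 0 (by decide) (by decide)).symm
  rw [(indepFun_iff_map_prod_eq_prod_map_map h₁.aemeasurable
    (h₂.prodMk h₃).aemeasurable).mp h1_23,
    (indepFun_iff_map_prod_eq_prod_map_map h₂.aemeasurable h₃.aemeasurable).mp h23]

lemma ae_nonneg_of_map_eq_tilt {Ω Ω' : Type*}
    {mΩ : MeasurableSpace Ω} {mΩ' : MeasurableSpace Ω'}
    {P : Measure Ω} {P' : Measure Ω'} {W : Ω → ℝ} {Wz : Ω' → ℝ} {z : ℝ}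
    (hWm : Measurable W) (hWnn : ∀ ω, 0 ≤ W ω) (hWzm : Measurable Wz)
    (hWz : P'.map Wz = tilt (P.map W) z) :
    ∀ᵐ ω' ∂P', 0 ≤ Wz ω' := by
  have hlaw : ∀ᵐ x ∂P.map W, 0 ≤ x := (ae_map_iff hWm.aemeasurable measurableSet_Ici).2
    (.of_forall hWnn)
  refine ae_of_ae_map hWzm.aemeasurable ?_
  rw [hWz, tilt_eq_tilted]
  exact (tilted_absolutelyContinuous _ _).ae_le hlaw

lemma integral_abs_sub_le_integral_add {Ω : Type*} {mΩ : MeasurableSpace Ω} {μ : Measure Ω}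
    {X Y : Ω → ℝ} (hX : ∀ᵐ ω ∂μ, 0 ≤ X ω) (hY : ∀ᵐ ω ∂μ, 0 ≤ Y ω) (hXi : Integrable X μ)
    (hYi : Integrable Y μ) :
    ∫ ω, |X ω - Y ω| ∂μ ≤ (∫ ω, X ω ∂μ) + ∫ ω, Y ω ∂μ := by
  rw [← integral_add hXi hYi]
  refine integral_mono_ae (hXi.sub hYi).abs (hXi.add hYi) ?_
  filter_upwards [hX, hY] with ω hXω hYω
  exact abs_le.2 ⟨by linarith, by linarith⟩

theorem integral_mul_exp_eq_mul_integral_of_map_eq_tilt {Ω Ω' : Type*}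
    {mΩ : MeasurableSpace Ω} {mΩ' : MeasurableSpace Ω'}
    {P : Measure Ω} [IsProbabilityMeasure P] {P' : Measure Ω'} [IsProbabilityMeasure P']
    {W Y Z : Ω → ℝ} {Wz Yz Zz : Ω' → ℝ} {z : ℝ}
    (hWm : Measurable W) (hYm : Measurable Y) (hZm : Measurable Z)
    (hindep : iIndepFun ![W, Y, Z] P)
    (hWzm : Measurable Wz) (hYzm : Measurable Yz) (hZzm : Measurable Zz)
    (hindep' : iIndepFun ![Wz, Yz, Zz] P')
    (hWz : P'.map Wz = tilt (P.map W) z) (hYz : P'.map Yz = tilt (P.map Y) z)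
    (hZz : P'.map Zz = tilt (P.map Z) z) {G : ℝ × ℝ × ℝ → ℝ} (hG : Measurable G) :
    ∫ ω, G (W ω, Y ω, Z ω) * exp (-(z * (W ω + Y ω + Z ω))) ∂P
      = (∫ ω, exp (-(z * W ω)) ∂P) * (∫ ω, exp (-(z * Y ω)) ∂P) * (∫ ω, exp (-(z * Z ω)) ∂P)
        * ∫ ω', G (Wz ω', Yz ω', Zz ω') ∂P' := by
  have hL {X : Ω → ℝ} (hX : Measurable X) :
      ∫ x, exp (-(z * x)) ∂P.map X = ∫ ω, exp (-(z * X ω)) ∂P :=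
    integral_map hX.aemeasurable (by fun_prop)
  have hL_ne {X : Ω → ℝ} {Xz : Ω' → ℝ} (hXz : Measurable Xz) (h : P'.map Xz = tilt (P.map X) z) :
      ∫ x, exp (-(z * x)) ∂P.map X ≠ 0 :=
    integral_exp_ne_zero_of_tilted_ne_zero <| by
      rw [← tilt_eq_tilted, ← h]
      exact (Measure.isProbabilityMeasure_map hXz.aemeasurable).ne_zero
  have hlaw' : P'.map (fun ω' => (Wz ω', Yz ω', Zz ω'))
      = ((P.map W).prod ((P.map Y).prod (P.map Z))).tilted
          fun p => -(z * p.1) + (-(z * p.2.1) + -(z * p.2.2)) := by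
    rw [hindep'.map_eq_prod_three hWzm hYzm hZzm, hWz, hYz, hZz, tilt_eq_tilted, tilt_eq_tilted,
      tilt_eq_tilted, prod_tilted (by fun_prop) (by fun_prop),
      prod_tilted (by fun_prop) (by fun_prop)]
  have hnorm : ∫ p, exp (-(z * p.1) + (-(z * p.2.1) + -(z * p.2.2)))
        ∂(P.map W).prod ((P.map Y).prod (P.map Z))
      = (∫ x, exp (-(z * x)) ∂P.map W)
        * ((∫ x, exp (-(z * x)) ∂P.map Y) * ∫ x, exp (-(z * x)) ∂P.map Z) := by
    rw [← integral_exp_add_prod (fun x => -(z * x)) (fun x => -(z * x))]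
    exact integral_exp_add_prod (fun x => -(z * x)) fun q : ℝ × ℝ => -(z * q.1) + -(z * q.2)
  rw [← integral_map (f := fun p => G p * exp (-(z * (p.1 + p.2.1 + p.2.2))))
      (hWm.prodMk (hYm.prodMk hZm)).aemeasurable (by fun_prop),
    hindep.map_eq_prod_three hWm hYm hZm,
    ← integral_map (hWzm.prodMk (hYzm.prodMk hZzm)).aemeasurable hG.aestronglyMeasurable,
    hlaw', integral_tilted, hnorm, ← integral_const_mul,
    ← hL hWm, ← hL hYm, ← hL hZm]
  congr 1
  ext p
  have hLW := hL_ne hWzm hWz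
  have hLY := hL_ne hYzm hYz
  have hLZ := hL_ne hZzm hZz
  rw [smul_eq_mul, show -(z * (p.1 + p.2.1 + p.2.2)) = -(z * p.1) + (-(z * p.2.1) + -(z * p.2.2))
    by ring]
  field_simp

theorem tilting_lemma_general
    {Ω : Type*} {mΩ : MeasurableSpace Ω} (P : Measure Ω) [IsProbabilityMeasure P]
    {Ω' : Type*} {mΩ' : MeasurableSpace Ω'} (P' : Measure Ω') [IsProbabilityMeasure P']
    (W Y Z : Ω → ℝ)
    (hWm : Measurable W) (hYm : Measurable Y) (hZm : Measurable Z)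
    (hWnn : ∀ ω, 0 ≤ W ω) (hYnn : ∀ ω, 0 ≤ Y ω) (hZnn : ∀ ω, 0 ≤ Z ω)
    (hindep : iIndepFun ![W, Y, Z] P)
    (a b c : ℝ) (ha : 0 ≤ a) (hb : 0 ≤ b) (hc : 0 ≤ c)
    (z : ℝ)
    (Wz Yz Zz : Ω' → ℝ)
    (hWzm : Measurable Wz) (hYzm : Measurable Yz) (hZzm : Measurable Zz)
    (hindep' : iIndepFun ![Wz, Yz, Zz] P')
    (hWz : Measure.map Wz P' = tilt (Measure.map W P) z)
    (hYz : Measure.map Yz P' = tilt (Measure.map Y P) z)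
    (hZz : Measure.map Zz P' = tilt (Measure.map Z P) z)
    (hWzint : Integrable Wz P') (hYzint : Integrable Yz P') (hZzint : Integrable Zz P') :
    ∫ ω, |a * W ω + b * Y ω - c * Z ω| * Real.exp (-(z * (W ω + Y ω + Z ω))) ∂P
      = (∫ ω, Real.exp (-(z * W ω)) ∂P) * (∫ ω, Real.exp (-(z * Y ω)) ∂P)
          * (∫ ω, Real.exp (-(z * Z ω)) ∂P)
        * (a * (∫ ω', Wz ω' ∂P') + b * (∫ ω', Yz ω' ∂P') + c * (∫ ω', Zz ω' ∂P'))
        * ((∫ ω', |(a * Wz ω' + b * Yz ω') - c * Zz ω'| ∂P')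
            / ((∫ ω', a * Wz ω' + b * Yz ω' ∂P') + ∫ ω', c * Zz ω' ∂P')) := by
  have key := integral_mul_exp_eq_mul_integral_of_map_eq_tilt hWm hYm hZm hindep hWzm hYzm hZzm
    hindep' hWz hYz hZz (G := fun p => |a * p.1 + b * p.2.1 - c * p.2.2|) (by fun_prop)
  have hWz0 := ae_nonneg_of_map_eq_tilt hWm hWnn hWzm hWz
  have hYz0 := ae_nonneg_of_map_eq_tilt hYm hYnn hYzm hYz
  have hZz0 := ae_nonneg_of_map_eq_tilt hZm hZnn hZzm hZz
  have hmean : (∫ ω', a * Wz ω' + b * Yz ω' ∂P') + ∫ ω', c * Zz ω' ∂P'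
      = a * (∫ ω', Wz ω' ∂P') + b * (∫ ω', Yz ω' ∂P') + c * (∫ ω', Zz ω' ∂P') := by
    rw [integral_add (hWzint.const_mul a) (hYzint.const_mul b), integral_const_mul,
      integral_const_mul, integral_const_mul]
  have hdiff_le := integral_abs_sub_le_integral_add
    (X := fun ω' => a * Wz ω' + b * Yz ω') (Y := fun ω' => c * Zz ω')
    (by filter_upwards [hWz0, hYz0] with ω' hW hY
      using add_nonneg (mul_nonneg ha hW) (mul_nonneg hb hY))
    (by filter_upwards [hZz0] with ω' hZ using mul_nonneg hc hZ)
    ((hWzint.const_mul a).add (hYzint.const_mul b)) (hZzint.const_mul c)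
  dsimp only at key
  rw [key, ← hmean, mul_assoc _ (_ + _), mul_div_cancel_of_imp' fun h0 =>
    le_antisymm (hdiff_le.trans h0.le) (integral_nonneg fun _ => abs_nonneg _)]

/-- Lemma 3.1. Let `W, Y, Z` be independent, non-degenerate, non-negative
random variables, `a, b, c ≥ 0`, `z > 0`, and assume all Laplace transforms and expectations
involved exist and are finite. Then
`E[|aW + bY - cZ| e^{-z(W+Y+Z)}] = L_W(z) L_Y(z) L_Z(z) (a E[W_z] + b E[Y_z] + c E[Z_z])
  G(aW_z + bY_z, cZ_z)`,
where `W_z, Y_z, Z_z` are independent random variables distributed as the exponential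
tiltings of `W, Y, Z`, and `G(Y₁,Y₂) = E|Y₁-Y₂| / (E[Y₁] + E[Y₂])` is the normalized mean
absolute difference. -/
theorem tilting_lemma
    {Ω : Type*} {mΩ : MeasurableSpace Ω} (P : Measure Ω) [IsProbabilityMeasure P]
    {Ω' : Type*} {mΩ' : MeasurableSpace Ω'} (P' : Measure Ω') [IsProbabilityMeasure P']
    (W Y Z : Ω → ℝ)
    (hWm : Measurable W) (hYm : Measurable Y) (hZm : Measurable Z)
    (hWnn : ∀ ω, 0 ≤ W ω) (hYnn : ∀ ω, 0 ≤ Y ω) (hZnn : ∀ ω, 0 ≤ Z ω)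
    (hWnd : ¬ ∃ c : ℝ, ∀ᵐ ω ∂P, W ω = c)
    (hYnd : ¬ ∃ c : ℝ, ∀ᵐ ω ∂P, Y ω = c)
    (hZnd : ¬ ∃ c : ℝ, ∀ᵐ ω ∂P, Z ω = c)
    (hindep : iIndepFun ![W, Y, Z] P)
    (a b c : ℝ) (ha : 0 ≤ a) (hb : 0 ≤ b) (hc : 0 ≤ c)
    (z : ℝ) (hz : 0 < z)
    (Wz Yz Zz : Ω' → ℝ)
    (hWzm : Measurable Wz) (hYzm : Measurable Yz) (hZzm : Measurable Zz)
    (hindep' : iIndepFun ![Wz, Yz, Zz] P')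
    (hWz : Measure.map Wz P' = tilt (Measure.map W P) z)
    (hYz : Measure.map Yz P' = tilt (Measure.map Y P) z)
    (hZz : Measure.map Zz P' = tilt (Measure.map Z P) z)
    -- all expectations involved are assumed to exist and be finite:
    (hint : Integrable
      (fun ω => |a * W ω + b * Y ω - c * Z ω| * Real.exp (-(z * (W ω + Y ω + Z ω)))) P)
    (hWzint : Integrable Wz P') (hYzint : Integrable Yz P') (hZzint : Integrable Zz P')
    (habs : Integrable (fun ω' => |a * Wz ω' + b * Yz ω' - c * Zz ω'|) P') :
    ∫ ω, |a * W ω + b * Y ω - c * Z ω| * Real.exp (-(z * (W ω + Y ω + Z ω))) ∂P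
      = (∫ ω, Real.exp (-(z * W ω)) ∂P) * (∫ ω, Real.exp (-(z * Y ω)) ∂P)
          * (∫ ω, Real.exp (-(z * Z ω)) ∂P)
        * (a * (∫ ω', Wz ω' ∂P') + b * (∫ ω', Yz ω' ∂P') + c * (∫ ω', Zz ω' ∂P'))
        * ((∫ ω', |(a * Wz ω' + b * Yz ω') - c * Zz ω'| ∂P')
            / ((∫ ω', a * Wz ω' + b * Yz ω' ∂P') + ∫ ω', c * Zz ω' ∂P')) :=
  tilting_lemma_general (mΩ := mΩ) P (mΩ' := mΩ') P' W Y Z hWm hYm hZm hWnn hYnn hZnn hindep a b c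
    ha hb hc z Wz Yz Zz hWzm hYzm hZzm hindep' hWz hYz hZz hWzint hYzint hZzint
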